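/- Let w be a permutation of {1,…,n} and let p = p₁⋯pₙ = φ(w) be its associated Motzkin path. Then dep(w) = Σ_{k : p_k = D} k − Σ_{i : p_i = U} i. -/

import Mathlib

/-- The three kinds of steps of a Motzkin path. -/
inductive Step : Type
  | U : Step
  | D : Step
  | H : Step
deriving DecidableEq
instance : Fintype Step := ⟨{Step.U, Step.D, Step.H}, fun x => by cases x <;> decide⟩
/-- The map `φ` from permutations of `{1,…,n}` to words over `{U,D,H}`:
`p_i = U` if `w⁻¹(i) > i < w(i)`, `p_i = D` if `w⁻¹(i) < i > w(i)`,
and `p_i = H` otherwise. -/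
def phi {n : ℕ} (w : Equiv.Perm (Fin n)) : Fin n → Step := fun i =>
  if i < w.symm i ∧ i < w i then Step.U
  else if w.symm i < i ∧ w i < i then Step.D
  else Step.H
/-- The depth of a permutation `w` of `{1,…,n}`:
`dep(w) = ∑_{i : w(i) > i} (w(i) - i)`. -/
def dep {n : ℕ} (w : Equiv.Perm (Fin n)) : ℕ :=
  ∑ i ∈ Finset.univ.filter (fun i : Fin n => i < w i), ((w i : ℕ) - (i : ℕ))

/-!
Let `E = {i : i < w i}` be the set of excedances of `w`, so that `w(E) = {j : w⁻¹ j < j}`.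
Then `dep w = ∑_{j ∈ w(E)} j - ∑_{i ∈ E} i`, and in this difference the terms over
`w(E) ∩ E` cancel. A point of `w(E) \ E` has `w⁻¹ j < j` and `w j ≤ j`, where equality is
impossible since a fixed point of `w` is one of `w⁻¹`; so `w(E) \ E` is exactly the set of
`D` steps, and symmetrically `E \ w(E)` is the set of `U` steps. Numbering positions from
`1` instead of `0` changes nothing, since `dep w` is a sum of differences `w i - i`.
-/

open Finset

namespace Equiv.Perm

variable {α : Type*} [LinearOrder α]

theorem not_lt_apply_iff_apply_lt {w : Perm α} {k : α} (h : w.symm k < k) :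
    ¬ k < w k ↔ w k < k := by
  have : w k ≠ k := fun hk => h.ne (w.symm_apply_eq.mpr hk.symm)
  exact ⟨fun hk => lt_of_le_of_ne (not_lt.mp hk) this, fun hk => not_lt.mpr hk.le⟩

theorem not_symm_apply_lt_iff_lt_symm_apply {w : Perm α} {k : α} (h : k < w k) :
    ¬ w.symm k < k ↔ k < w.symm k := by
  have : w.symm k ≠ k := fun hk => h.ne' (w.eq_symm_apply.mp hk.symm)
  exact ⟨fun hk => lt_of_le_of_ne (not_lt.mp hk) this.symm, fun hk => not_lt.mpr hk.le⟩

variable [Fintype α]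

def excedances (w : Perm α) : Finset α :=
  univ.filter fun i => i < w i

theorem mem_excedances {w : Perm α} {i : α} : i ∈ w.excedances ↔ i < w i := by
  simp [excedances]

theorem mem_map_excedances {w : Perm α} {j : α} :
    j ∈ w.excedances.map w.toEmbedding ↔ w.symm j < j := by
  simp only [mem_map_equiv, mem_excedances, apply_symm_apply]

end Equiv.Perm

open Equiv.Perm

variable {n : ℕ}

theorem phi_eq_U_iff (w : Equiv.Perm (Fin n)) (i : Fin n) :
    phi w i = Step.U ↔ i < w.symm i ∧ i < w i := by
  unfold phi; split_ifs <;> simp_all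

theorem phi_eq_D_iff (w : Equiv.Perm (Fin n)) (i : Fin n) :
    phi w i = Step.D ↔ w.symm i < i ∧ w i < i := by
  unfold phi
  split_ifs with hU hD
  · simpa using fun h : w.symm i < i => absurd hU.1 (asymm h)
  · simpa using hD
  · simpa using hD

theorem filter_phi_eq_D (w : Equiv.Perm (Fin n)) :
    univ.filter (fun k => phi w k = Step.D) = w.excedances.map w.toEmbedding \ w.excedances := by
  ext k
  simp only [mem_filter, mem_univ, true_and, mem_sdiff, mem_map_excedances, mem_excedances,
    phi_eq_D_iff]
  exact ⟨fun h => ⟨h.1, (not_lt_apply_iff_apply_lt h.1).mpr h.2⟩,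
    fun h => ⟨h.1, (not_lt_apply_iff_apply_lt h.1).mp h.2⟩⟩

theorem filter_phi_eq_U (w : Equiv.Perm (Fin n)) :
    univ.filter (fun i => phi w i = Step.U) = w.excedances \ w.excedances.map w.toEmbedding := by
  ext i
  simp only [mem_filter, mem_univ, true_and, mem_sdiff, mem_map_excedances, mem_excedances,
    phi_eq_U_iff]
  exact ⟨fun h => ⟨h.2, (not_symm_apply_lt_iff_lt_symm_apply h.2).mpr h.1⟩,
    fun h => ⟨(not_symm_apply_lt_iff_lt_symm_apply h.1).mp h.2, h.1⟩⟩

theorem dep_eq_sum_map_excedances_sub_sum_excedances (w : Equiv.Perm (Fin n)) (c : ℤ) :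
    (dep w : ℤ) = ∑ j ∈ w.excedances.map w.toEmbedding, (((j : ℕ) : ℤ) + c)
      - ∑ i ∈ w.excedances, (((i : ℕ) : ℤ) + c) := by
  rw [sum_map, ← sum_sub_distrib, dep, Nat.cast_sum]
  refine sum_congr rfl fun i hi => ?_
  have : (i : ℕ) ≤ (w i : ℕ) := (mem_excedances.mp hi).le
  simp only [Equiv.coe_toEmbedding]
  omega

/-- If `p = φ(w)` is the Motzkin path associated to a permutation `w` of
`{1,…,n}`, then `dep(w) = ∑_{k : p_k = D} k - ∑_{i : p_i = U} i`
(positions numbered `1,…,n`). -/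
theorem dep_eq_sum_D_sub_sum_U (n : ℕ) (w : Equiv.Perm (Fin n)) :
    (dep w : ℤ) =
      (∑ k ∈ Finset.univ.filter (fun k : Fin n => phi w k = Step.D),
        (((k : ℕ) : ℤ) + 1))
      - ∑ i ∈ Finset.univ.filter (fun i : Fin n => phi w i = Step.U),
          (((i : ℕ) : ℤ) + 1) := by
  rw [filter_phi_eq_D, filter_phi_eq_U, sum_sdiff_sub_sum_sdiff,
    dep_eq_sum_map_excedances_sub_sum_excedances w 1]
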